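/- arXiv:2204.00773 — 6 statements merged into one kernel-verified Lean document; each statement's English description precedes it below -/
import Mathlib

section
/- Let n ≥ 1, let L₁,…,Lₙ > 0, S > 0, t > 0, P > 0, and let 0 < pᵢ ≤ P for i = 1,…,n. Let μ be the product on ℝⁿ of n copies of the exponential distribution with rate 1. Then μ{λ ∈ ℝⁿ : ∑_{i=1}^n Lᵢ·log₂(1 + S·λᵢ·pᵢ) < t} ≤ (∏_{i=1}^n P/pᵢ) · μ{λ ∈ ℝⁿ : ∑_{i=1}^n Lᵢ·log₂(1 + S·λᵢ·P) < t}. -/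
/-!
Write `c i = P / p i ≥ 1`. The event at powers `p` is the preimage of the event at power `P` under
`λ ↦ (λ i / c i)ᵢ`, and `Exp(1)` divided by `c i` is `Exp(c i)`, whose density is at most `c i` times
that of `Exp(1)`. Taking the product over the blocks bounds the pushed-forward product measure by
`∏ c i` times the original one.
-/

open MeasureTheory ProbabilityTheory Real
open scoped ENNReal

namespace ProbabilityTheory

lemma map_div_expMeasure {r a : ℝ} (hr : 0 < r) (ha : 0 < a) :
    (expMeasure r).map (· / a) = expMeasure (r * a) := by
  have := isProbabilityMeasure_expMeasure hr
  have := isProbabilityMeasure_expMeasure (mul_pos hr ha)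
  have hm : Measurable (· / a) := measurable_id.div_const a
  have := Measure.isProbabilityMeasure_map (μ := expMeasure r) hm.aemeasurable
  refine Measure.eq_of_cdf _ _ (StieltjesFunction.ext fun x => ?_)
  rw [cdf_eq_real, measureReal_def, Measure.map_apply hm measurableSet_Iic, ← measureReal_def]
  have hpre : (· / a) ⁻¹' Set.Iic x = Set.Iic (x * a) := by
    ext y; simp [div_le_iff₀ ha]
  rw [hpre, ← cdf_eq_real, cdf_expMeasure_eq hr, cdf_expMeasure_eq (mul_pos hr ha)]
  simp only [mul_nonneg_iff_of_pos_right ha, mul_assoc, mul_comm a x]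

lemma expMeasure_mul_le_smul_expMeasure {r a : ℝ} (hr : 0 ≤ r) (ha : 1 ≤ a) :
    expMeasure (r * a) ≤ ENNReal.ofReal a • expMeasure r := by
  change volume.withDensity (exponentialPDF (r * a))
    ≤ ENNReal.ofReal a • volume.withDensity (exponentialPDF r)
  have hm : Measurable (exponentialPDF r) := (measurable_exponentialPDFReal r).ennreal_ofReal
  rw [← withDensity_smul _ hm]
  refine withDensity_mono (Filter.Eventually.of_forall fun x => ?_)
  rcases lt_or_ge x 0 with hx | hx
  · simp [exponentialPDF_of_neg hx]
  rw [Pi.smul_apply, smul_eq_mul, exponentialPDF_of_nonneg hx, exponentialPDF_of_nonneg hx,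
    ← ENNReal.ofReal_mul (by linarith)]
  refine ENNReal.ofReal_le_ofReal ?_
  calc r * a * rexp (-(r * a * x)) ≤ r * a * rexp (-(r * x)) := by
        gcongr
        nlinarith [mul_nonneg hr hx]
    _ = a * (r * rexp (-(r * x))) := by ring

end ProbabilityTheory

namespace MeasureTheory.Measure

lemma pi_le_prod_smul_pi {ι : Type*} [Fintype ι] {α : ι → Type*} [∀ i, MeasurableSpace (α i)]
    {ν μ : ∀ i, Measure (α i)} {k : ι → ℝ≥0∞} (hk : ∀ i, k i ≠ ∞)
    (h : ∀ i, ν i ≤ k i • μ i) :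
    Measure.pi ν ≤ (∏ i, k i) • Measure.pi μ := by
  -- Both sides are outer measures bounded by box premeasures, which compare factorwise.
  have houter : OuterMeasure.pi (fun i => (ν i).toOuterMeasure)
      ≤ (∏ i, k i) • OuterMeasure.pi (fun i => (μ i).toOuterMeasure) := by
    rw [OuterMeasure.pi, OuterMeasure.pi,
      OuterMeasure.smul_boundedBy (ENNReal.prod_ne_top fun i _ => hk i)]
    refine OuterMeasure.le_boundedBy.2 fun t => (OuterMeasure.boundedBy_le t).trans ?_
    rw [Pi.smul_apply, smul_eq_mul, piPremeasure, piPremeasure, ← Finset.prod_mul_distrib]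
    exact Finset.prod_le_prod' fun i _ => h i _
  refine Measure.le_iff.2 fun s hs => ?_
  rw [Measure.smul_apply, Measure.pi_def, Measure.pi_def, toMeasure_apply _ _ hs,
    toMeasure_apply _ _ hs]
  exact houter s

end MeasureTheory.Measure

theorem outage_bound_rayleigh_general
    (n : ℕ) (L : Fin n → ℝ)
    (S t P : ℝ) (hP : 0 < P)
    (p : Fin n → ℝ) (hp : ∀ i, 0 < p i) (hpP : ∀ i, p i ≤ P)
    (μ : Measure (Fin n → ℝ))
    (hμ : μ = Measure.pi fun _ : Fin n => expMeasure 1) :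
    μ {lam : Fin n → ℝ | ∑ i, L i * Real.logb 2 (1 + S * lam i * p i) < t}
      ≤ ENNReal.ofReal (∏ i, P / p i) *
        μ {lam : Fin n → ℝ | ∑ i, L i * Real.logb 2 (1 + S * lam i * P) < t} := by
  subst hμ
  have := isProbabilityMeasure_expMeasure one_pos
  set B := {lam : Fin n → ℝ | ∑ i, L i * Real.logb 2 (1 + S * lam i * P) < t}
  have hpre : {lam : Fin n → ℝ | ∑ i, L i * Real.logb 2 (1 + S * lam i * p i) < t}
      = (fun lam i => lam i / (P / p i)) ⁻¹' B := by
    ext lam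
    have (i : Fin n) : S * (lam i / (P / p i)) * P = S * lam i * p i := by
      field_simp [(hp i).ne', hP.ne']
    simp only [B, Set.mem_ofPred_eq, Set.mem_preimage, this]
  have hdiv (i : Fin n) : Measurable (· / (P / p i)) := measurable_id.div_const _
  rw [hpre]
  calc (Measure.pi fun _ => expMeasure 1) ((fun lam i => lam i / (P / p i)) ⁻¹' B)
      ≤ (Measure.pi fun _ => expMeasure 1).map (fun lam i => lam i / (P / p i)) B :=
        Measure.le_map_apply (measurable_pi_lambda _ fun i => (hdiv i).comp
          (measurable_pi_apply i)).aemeasurable B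
    _ = Measure.pi (fun i => expMeasure (1 * (P / p i))) B := by
        rw [Measure.pi_map_pi fun i => (hdiv i).aemeasurable]
        congr 2
        funext i
        exact map_div_expMeasure one_pos (div_pos hP (hp i))
    _ ≤ (∏ i, ENNReal.ofReal (P / p i)) * Measure.pi (fun _ => expMeasure 1) B :=
        Measure.pi_le_prod_smul_pi (fun _ => ENNReal.ofReal_ne_top)
          (fun i => expMeasure_mul_le_smul_expMeasure zero_le_one
            ((one_le_div (hp i)).2 (hpP i))) B
    _ = ENNReal.ofReal (∏ i, P / p i) * Measure.pi (fun _ => expMeasure 1) B := by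
        rw [ENNReal.ofReal_prod_of_nonneg fun i _ => (div_pos hP (hp i)).le]

theorem outage_bound_rayleigh
    (n : ℕ) (hn : 1 ≤ n) (L : Fin n → ℝ) (hL : ∀ i, 0 < L i)
    (S t P : ℝ) (hS : 0 < S) (ht : 0 < t) (hP : 0 < P)
    (p : Fin n → ℝ) (hp : ∀ i, 0 < p i) (hpP : ∀ i, p i ≤ P)
    (μ : Measure (Fin n → ℝ))
    (hμ : μ = Measure.pi fun _ : Fin n => expMeasure 1) :
    μ {lam : Fin n → ℝ | ∑ i, L i * Real.logb 2 (1 + S * lam i * p i) < t}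
      ≤ ENNReal.ofReal (∏ i, P / p i) *
        μ {lam : Fin n → ℝ | ∑ i, L i * Real.logb 2 (1 + S * lam i * P) < t} :=
  outage_bound_rayleigh_general n L S t P hP p hp hpP μ hμ
end

section
/- Let n ≥ 1, let M ≥ 1 be a natural number, let L₁,…,Lₙ > 0, S > 0, t > 0, P > 0, and let 0 < pᵢ ≤ P for i = 1,…,n. Let μ be the product on ℝⁿ of n copies of the Gamma distribution with shape M and rate 1. Then μ{λ ∈ ℝⁿ : ∑_{i=1}^n Lᵢ·log₂(1 + S·λᵢ·pᵢ) < t} ≤ (∏_{i=1}^n (P/pᵢ)^M) · μ{λ ∈ ℝⁿ : ∑_{i=1}^n Lᵢ·log₂(1 + S·λᵢ·P) < t}. -/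
open MeasureTheory ProbabilityTheory Real
open scoped ENNReal NNReal

/-!
Lowering the power of branch `i` from `P` to `p i` is the same as scaling its gain by
`c i = p i / P ≤ 1`, so the outage event at powers `p` is the preimage of the outage event at
power `P` under `λ ↦ (λ i * c i)ᵢ`. If `X ~ Gamma(a, r)` has density `f`, then `c X` has
density `c⁻¹ f (y / c) ≤ c⁻¹ ^ a f y`, since `(y / c) ^ (a - 1) = c⁻¹ ^ (a - 1) y ^ (a - 1)`
and `exp (-r y / c) ≤ exp (-r y)`. Taking the product over the coordinates gives the factor
`∏ i, (P / p i) ^ M`.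
-/

namespace MeasureTheory.Measure

variable {ι : Type*} [Fintype ι] {α : ι → Type*} [∀ i, MeasurableSpace (α i)]

lemma pi_mono {μ ν : ∀ i, Measure (α i)} (h : ∀ i, μ i ≤ ν i) :
    Measure.pi μ ≤ Measure.pi ν := by
  refine Measure.le_iff.2 fun s hs => ?_
  rw [Measure.pi, Measure.pi, toMeasure_apply _ _ hs, toMeasure_apply _ _ hs]
  refine OuterMeasure.le_boundedBy'.2 (fun t _ => ?_) s
  exact (OuterMeasure.boundedBy_le t).trans (Finset.prod_le_prod' fun i _ => h i _)

lemma pi_smul (μ : ∀ i, Measure (α i)) [∀ i, SigmaFinite (μ i)] (K : ι → ℝ≥0) :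
    Measure.pi (fun i => K i • μ i) = (∏ i, K i) • Measure.pi μ :=
  Measure.pi_eq fun s hs => by
    simp only [Measure.smul_apply, Measure.pi_pi, ENNReal.smul_def, smul_eq_mul,
      ENNReal.ofNNReal_finsetProd, Finset.prod_mul_distrib]

end MeasureTheory.Measure

lemma Real.map_withDensity_mul_right {f : ℝ → ℝ≥0∞} (hf : Measurable f) {c : ℝ} (hc : c ≠ 0) :
    (volume.withDensity f).map (· * c) =
      ENNReal.ofReal |c⁻¹| • volume.withDensity (fun y => f (y * c⁻¹)) := by
  have hg : Measurable fun x : ℝ => x * c := measurable_mul_const c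
  ext s hs
  rw [Measure.map_apply hg hs, withDensity_apply _ (hg hs), Measure.smul_apply,
    withDensity_apply _ hs, ← lintegral_smul_measure, ← Measure.restrict_smul,
    ← Real.map_volume_mul_right hc,
    setLIntegral_map (f := fun y => f (y * c⁻¹)) hs (by fun_prop) hg]
  simp [mul_inv_cancel_right₀ hc]

namespace ProbabilityTheory

instance (a r : ℝ) : SigmaFinite (gammaMeasure a r) :=
  SigmaFinite.withDensity_ofReal _

lemma gammaPDF_mul_inv_le {a r c : ℝ} (ha : 0 ≤ a) (hr : 0 ≤ r) (hc : 0 < c) (hc1 : c ≤ 1)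
    (y : ℝ) : gammaPDF a r (y * c⁻¹) ≤ ENNReal.ofReal (c⁻¹ ^ (a - 1)) * gammaPDF a r y := by
  rcases lt_or_ge y 0 with hy | hy
  · simp [gammaPDF_of_neg (mul_neg_of_neg_of_pos hy (inv_pos.2 hc))]
  have hyc : 0 ≤ y * c⁻¹ := by positivity
  rw [gammaPDF_of_nonneg hyc, gammaPDF_of_nonneg hy, ← ENNReal.ofReal_mul (by positivity)]
  refine ENNReal.ofReal_le_ofReal ?_
  have hΓ := Real.Gamma_nonneg_of_nonneg ha
  have hexp : rexp (-(r * (y * c⁻¹))) ≤ rexp (-(r * y)) := by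
    gcongr
    exact le_mul_of_one_le_right hy (one_le_inv₀ hc |>.2 hc1)
  calc r ^ a / Gamma a * (y * c⁻¹) ^ (a - 1) * rexp (-(r * (y * c⁻¹)))
      = c⁻¹ ^ (a - 1) * (r ^ a / Gamma a * y ^ (a - 1) * rexp (-(r * (y * c⁻¹)))) := by
        rw [Real.mul_rpow hy (by positivity)]; ring
    _ ≤ c⁻¹ ^ (a - 1) * (r ^ a / Gamma a * y ^ (a - 1) * rexp (-(r * y))) := by gcongr

lemma gammaMeasure_map_mul_le {a r c : ℝ} (ha : 0 ≤ a) (hr : 0 ≤ r) (hc : 0 < c) (hc1 : c ≤ 1) :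
    (gammaMeasure a r).map (· * c) ≤ (c⁻¹ ^ a).toNNReal • gammaMeasure a r := by
  have hpdf : Measurable (gammaPDF a r) := (measurable_gammaPDFReal a r).ennreal_ofReal
  rw [gammaMeasure, Real.map_withDensity_mul_right hpdf hc.ne']
  calc ENNReal.ofReal |c⁻¹| • volume.withDensity (fun y => gammaPDF a r (y * c⁻¹))
      ≤ ENNReal.ofReal |c⁻¹| • volume.withDensity
          (ENNReal.ofReal (c⁻¹ ^ (a - 1)) • gammaPDF a r) := by
        gcongr
        exact withDensity_mono (ae_of_all _ fun y => gammaPDF_mul_inv_le ha hr hc hc1 y)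
    _ = (c⁻¹ ^ a).toNNReal • volume.withDensity (gammaPDF a r) := by
        rw [withDensity_smul _ hpdf, smul_smul, ← ENNReal.ofReal_mul (abs_nonneg _),
          abs_of_pos (inv_pos.2 hc), mul_comm,
          ← Real.rpow_add_one (inv_ne_zero hc.ne'), sub_add_cancel]
        rfl

end ProbabilityTheory

theorem outage_bound_miso_general
    (n : ℕ) (M : ℕ)
    (L : Fin n → ℝ)
    (S t P : ℝ) (hP : 0 < P)
    (p : Fin n → ℝ) (hp : ∀ i, 0 < p i) (hpP : ∀ i, p i ≤ P)
    (μ : Measure (Fin n → ℝ))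
    (hμ : μ = Measure.pi fun _ : Fin n => gammaMeasure (M : ℝ) 1) :
    μ {lam : Fin n → ℝ | ∑ i, L i * Real.logb 2 (1 + S * lam i * p i) < t}
      ≤ ENNReal.ofReal (∏ i, (P / p i) ^ M) *
        μ {lam : Fin n → ℝ | ∑ i, L i * Real.logb 2 (1 + S * lam i * P) < t} := by
  subst hμ
  set γ := gammaMeasure (M : ℝ) 1
  set c : Fin n → ℝ := fun i => p i / P
  have hc : ∀ i, 0 < c i := fun i => div_pos (hp i) hP
  have hc1 : ∀ i, c i ≤ 1 := fun i => (div_le_one hP).2 (hpP i)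
  have hγ (i : Fin n) : γ.map (· * c i) ≤ ((c i)⁻¹ ^ (M : ℝ)).toNNReal • γ :=
    gammaMeasure_map_mul_le M.cast_nonneg zero_le_one (hc i) (hc1 i)
  have (i : Fin n) : SigmaFinite (γ.map (· * c i)) := Measure.sigmaFinite_of_le _ (hγ i)
  have hpre : {lam : Fin n → ℝ | ∑ i, L i * Real.logb 2 (1 + S * lam i * p i) < t} =
      (fun lam i => lam i * c i) ⁻¹'
        {lam | ∑ i, L i * Real.logb 2 (1 + S * lam i * P) < t} := by
    ext lam
    simp [c, mul_assoc, div_mul_cancel₀ _ hP.ne']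
  rw [hpre]
  calc (Measure.pi fun _ => γ) ((fun lam i => lam i * c i) ⁻¹' _)
      ≤ ((Measure.pi fun _ => γ).map fun lam i => lam i * c i) _ :=
        Measure.le_map_apply
          (measurable_pi_lambda _ fun i => (measurable_pi_apply i).mul_const _).aemeasurable _
    _ = Measure.pi (fun i => γ.map (· * c i)) _ := by
        rw [Measure.pi_map_pi fun i => (measurable_mul_const (c i)).aemeasurable]
    _ ≤ Measure.pi (fun i => ((c i)⁻¹ ^ (M : ℝ)).toNNReal • γ) _ := Measure.pi_mono hγ _
    _ = _ := by
        rw [Measure.pi_smul, Measure.smul_apply, ENNReal.smul_def, smul_eq_mul,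
          ENNReal.ofReal, ← Real.toNNReal_prod_of_nonneg fun i _ =>
          Real.rpow_nonneg (inv_nonneg.2 (hc i).le) _]
        simp only [c, Real.rpow_natCast, inv_div]

theorem outage_bound_miso
    (n : ℕ) (hn : 1 ≤ n) (M : ℕ) (hM : 1 ≤ M)
    (L : Fin n → ℝ) (hL : ∀ i, 0 < L i)
    (S t P : ℝ) (hS : 0 < S) (ht : 0 < t) (hP : 0 < P)
    (p : Fin n → ℝ) (hp : ∀ i, 0 < p i) (hpP : ∀ i, p i ≤ P)
    (μ : Measure (Fin n → ℝ))
    (hμ : μ = Measure.pi fun _ : Fin n => gammaMeasure (M : ℝ) 1) :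
    μ {lam : Fin n → ℝ | ∑ i, L i * Real.logb 2 (1 + S * lam i * p i) < t}
      ≤ ENNReal.ofReal (∏ i, (P / p i) ^ M) *
        μ {lam : Fin n → ℝ | ∑ i, L i * Real.logb 2 (1 + S * lam i * P) < t} :=
  outage_bound_miso_general n M L S t P hP p hp hpP μ hμ
end

section
/- Let n ≥ 1, let L₁,…,Lₙ > 0, S > 0, t > 0, and let μ be the product on ℝⁿ of n copies of the exponential distribution with rate 1. Then, as P → ∞, Pⁿ · μ{λ ∈ ℝⁿ : ∑_{i=1}^n Lᵢ·log₂(1 + S·λᵢ·P) < t} converges to the Lebesgue measure of the set {u ∈ ℝⁿ : uᵢ ≥ 0 for all i, and ∑_{i=1}^n Lᵢ·log₂(1 + S·uᵢ) < t}. -/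
/-!
Under the substitution `λ = P⁻¹ • u`, Lebesgue's scaling `d λ = P⁻ⁿ d u` turns
`Pⁿ · μ {λ | f (P • λ) < t}` into `∫⁻ u in {f < t}, ∏ᵢ e^{-uᵢ/P} 𝟙[uᵢ ≥ 0]`, where `f` is the
sum of the logarithms. As `P → ∞` the integrand increases to the indicator of the nonnegative
orthant, so monotone convergence gives the volume of `{u ≥ 0, f u < t}`.
-/

open MeasureTheory ProbabilityTheory Real Filter Set Topology
open scoped ENNReal

theorem lintegral_fintype_prod_eq_prod {ι : Type*} [Fintype ι] {X : ι → Type*}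
    [∀ i, MeasurableSpace (X i)] (μ : ∀ i, Measure (X i)) [∀ i, SigmaFinite (μ i)]
    {g : ∀ i, X i → ℝ≥0∞} (hg : ∀ i, Measurable (g i)) :
    ∫⁻ x, ∏ i, g i (x i) ∂Measure.pi μ = ∏ i, ∫⁻ y, g i y ∂μ i := by
  classical
  have hmeas : Measurable fun x : ∀ i, X i ↦ ∏ i, g i (x i) := by fun_prop
  have hmarginal : ∀ (s : Finset ι) (x : ∀ i, X i), (∫⋯∫⁻_s, (fun x ↦ ∏ i, g i (x i)) ∂μ) x =
      ∏ i, if i ∈ s then ∫⁻ y, g i y ∂μ i else g i (x i) := by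
    intro s
    induction s using Finset.induction_on with
    | empty => simp
    | insert j s hj ih =>
      intro x
      rw [lmarginal_insert _ hmeas hj]
      simp_rw [ih, Fintype.prod_eq_mul_prod_compl j, if_neg hj,
        if_pos (Finset.mem_insert_self j s)]
      have hrest : ∀ z, (∏ i ∈ {j}ᶜ, if i ∈ s then ∫⁻ y, g i y ∂μ i
          else g i (Function.update x j z i)) =
          ∏ i ∈ {j}ᶜ, if i ∈ insert j s then ∫⁻ y, g i y ∂μ i else g i (x i) := fun z ↦
        Finset.prod_congr rfl fun i hi ↦ by
          have hij : i ≠ j := by simpa using hi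
          simp [hij]
      simp_rw [Function.update_self, hrest]
      exact lintegral_mul_const _ (hg j)
  -- evaluating the marginal needs a point of the product space
  rcases isEmpty_or_nonempty (∀ i, X i) with h | ⟨⟨x⟩⟩
  · obtain ⟨i, hi⟩ := isEmpty_pi.mp h
    simp [Finset.prod_eq_zero (Finset.mem_univ i)]
  · simpa using hmarginal Finset.univ x

theorem Measure.pi_withDensity {ι : Type*} [Fintype ι] {X : ι → Type*}
    [∀ i, MeasurableSpace (X i)] (μ : ∀ i, Measure (X i)) [∀ i, SigmaFinite (μ i)]
    {g : ∀ i, X i → ℝ≥0∞} (hg : ∀ i, Measurable (g i))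
    [∀ i, SigmaFinite ((μ i).withDensity (g i))] :
    Measure.pi (fun i ↦ (μ i).withDensity (g i)) =
      (Measure.pi μ).withDensity fun x ↦ ∏ i, g i (x i) := by
  refine Measure.pi_eq (μ := fun i ↦ (μ i).withDensity (g i)) fun s hs ↦ ?_
  rw [withDensity_apply' _, Measure.restrict_pi_pi, lintegral_fintype_prod_eq_prod _ hg]
  simp_rw [withDensity_apply' _]

@[fun_prop]
lemma measurable_exponentialPDF (r : ℝ) : Measurable (exponentialPDF r) :=
  (measurable_exponentialPDFReal r).ennreal_ofReal

theorem pi_expMeasure_one_eq_withDensity (ι : Type*) [Fintype ι] :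
    Measure.pi (fun _ : ι ↦ expMeasure 1) =
      volume.withDensity fun x : ι → ℝ ↦ ∏ i, exponentialPDF 1 (x i) := by
  have : IsProbabilityMeasure (volume.withDensity (exponentialPDF 1)) :=
    isProbabilityMeasure_expMeasure one_pos
  -- `expMeasure 1` unfolds to a `gammaPDF` density; fix the density as `exponentialPDF 1`
  show Measure.pi (fun _ ↦ volume.withDensity (exponentialPDF 1)) = _
  exact Measure.pi_withDensity _ fun _ ↦ measurable_exponentialPDF 1

theorem ofReal_pow_finrank_mul_withDensity_preimage_smul {E : Type*} [NormedAddCommGroup E]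
    [NormedSpace ℝ E] [MeasurableSpace E] [BorelSpace E] [FiniteDimensional ℝ E]
    (μ : Measure E) [μ.IsAddHaarMeasure] (ρ : E → ℝ≥0∞) {P : ℝ} (hP : 0 < P) (C : Set E) :
    ENNReal.ofReal (P ^ Module.finrank ℝ E) * μ.withDensity ρ ((P • ·) ⁻¹' C) =
      ∫⁻ u in C, ρ (P⁻¹ • u) ∂μ := by
  have hscale : MeasurePreserving (P⁻¹ • · : E → E) μ
      (ENNReal.ofReal (P ^ Module.finrank ℝ E) • μ) := by
    refine ⟨measurable_const_smul _, ?_⟩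
    rw [Measure.map_addHaar_smul μ (inv_ne_zero hP.ne'), inv_pow, inv_inv,
      abs_of_pos (pow_pos hP _)]
  have hpre : (P⁻¹ • · : E → E) ⁻¹' ((P • ·) ⁻¹' C) = C := by
    ext u; simp [smul_smul, hP.ne']
  rw [withDensity_apply' _, ← smul_eq_mul, ← lintegral_smul_measure, ← Measure.restrict_smul,
    ← hscale.setLIntegral_comp_preimage_emb (measurableEmbedding_const_smul₀ (inv_ne_zero hP.ne')),
    hpre]

theorem tendsto_lintegral_atTop_of_monotoneOn {α : Type*} [MeasurableSpace α] {μ : Measure α}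
    {f : ℝ → α → ℝ≥0∞} {F : α → ℝ≥0∞} {a : ℝ} (hf : ∀ P, AEMeasurable (f P) μ)
    (hmono : ∀ x, MonotoneOn (f · x) (Ici a))
    (hlim : ∀ x, Tendsto (f · x) atTop (𝓝 (F x))) :
    Tendsto (fun P ↦ ∫⁻ x, f P x ∂μ) atTop (𝓝 (∫⁻ x, F x ∂μ)) := by
  -- `g` is monotone on all of `ℝ`; its limit is identified along `ℕ`, where Beppo Levi applies
  set g : ℝ → α → ℝ≥0∞ := fun P ↦ f (max a P)
  have hfg : (fun P ↦ ∫⁻ x, g P x ∂μ) =ᶠ[atTop] fun P ↦ ∫⁻ x, f P x ∂μ := by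
    filter_upwards [eventually_ge_atTop a] with P hP
    simp [g, max_eq_right hP]
  have hg_mono : ∀ x, Monotone (g · x) := fun x P Q hPQ ↦
    hmono x (le_max_left a P) (le_max_left a Q) (max_le_max_left a hPQ)
  have hG_mono : Monotone fun P ↦ ∫⁻ x, g P x ∂μ := fun P Q hPQ ↦
    lintegral_mono fun x ↦ hg_mono x hPQ
  have hseq : Tendsto (fun n : ℕ ↦ ∫⁻ x, g n x ∂μ) atTop (𝓝 (∫⁻ x, F x ∂μ)) :=
    lintegral_tendsto_of_tendsto_of_monotone (fun n ↦ hf _)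
      (ae_of_all _ fun x _ _ hmn ↦ hg_mono x (Nat.cast_le.mpr hmn))
      (ae_of_all _ fun x ↦ ((hlim x).comp (tendsto_atTop_atTop_of_monotone
        (fun _ _ ↦ max_le_max_left a) fun P ↦ ⟨P, le_max_right a P⟩)).comp
          tendsto_natCast_atTop_atTop)
  have hsup := tendsto_atTop_iSup hG_mono
  rw [tendsto_nhds_unique (hsup.comp tendsto_natCast_atTop_atTop) hseq] at hsup
  exact hsup.congr' hfg

lemma exponentialPDF_one_inv_mul {P : ℝ} (hP : 0 < P) (x : ℝ) :
    exponentialPDF 1 (P⁻¹ * x) = if 0 ≤ x then ENNReal.ofReal (exp (-(P⁻¹ * x))) else 0 := by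
  simp [exponentialPDF_eq, mul_nonneg_iff_of_pos_left (inv_pos.mpr hP), apply_ite ENNReal.ofReal]

lemma monotoneOn_exponentialPDF_one_inv_mul (x : ℝ) :
    MonotoneOn (fun P ↦ exponentialPDF 1 (P⁻¹ * x)) (Ioi 0) := by
  intro P hP Q hQ hPQ
  simp only [exponentialPDF_one_inv_mul hP, exponentialPDF_one_inv_mul hQ]
  split_ifs with hx
  · gcongr
  · rfl

lemma tendsto_exponentialPDF_one_inv_mul (x : ℝ) :
    Tendsto (fun P ↦ exponentialPDF 1 (P⁻¹ * x)) atTop (𝓝 (if 0 ≤ x then 1 else 0)) := by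
  have hpos : ∀ᶠ P : ℝ in atTop, 0 < P := eventually_gt_atTop 0
  by_cases hx : 0 ≤ x
  · have hexp : Tendsto (fun P : ℝ ↦ ENNReal.ofReal (exp (-(P⁻¹ * x)))) atTop (𝓝 1) := by
      simpa using ENNReal.tendsto_ofReal (tendsto_inv_atTop_zero.mul_const x).neg.rexp
    rw [if_pos hx]
    refine hexp.congr' ?_
    filter_upwards [hpos] with P hP
    simp [exponentialPDF_one_inv_mul hP, hx]
  · rw [if_neg hx]
    refine tendsto_const_nhds.congr' ?_
    filter_upwards [hpos] with P hP
    simp [exponentialPDF_one_inv_mul hP, hx]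

theorem tendsto_setLIntegral_pi_exponentialPDF_inv_smul {ι : Type*} [Fintype ι]
    (C : Set (ι → ℝ)) :
    Tendsto (fun P : ℝ ↦ ∫⁻ u in C, ∏ i, exponentialPDF 1 ((P⁻¹ • u) i)) atTop
      (𝓝 (volume ({u | ∀ i, 0 ≤ u i} ∩ C))) := by
  classical
  have hO : MeasurableSet {u : ι → ℝ | ∀ i, 0 ≤ u i} := by
    simpa only [ofPred_forall] using
      MeasurableSet.iInter fun i ↦ measurableSet_le measurable_const (measurable_pi_apply i)
  rw [← Measure.restrict_apply hO, ← lintegral_indicator_one hO]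
  refine tendsto_lintegral_atTop_of_monotoneOn (a := 1) (fun P ↦ by fun_prop)
    (fun u P hP Q hQ hPQ ↦ Finset.prod_le_prod' fun i _ ↦ ?_) fun u ↦ ?_
  · exact monotoneOn_exponentialPDF_one_inv_mul (u i) (mem_Ioi.2 (zero_lt_one.trans_le hP))
      (mem_Ioi.2 (zero_lt_one.trans_le hQ)) hPQ
  · have := ENNReal.tendsto_finsetProd_of_ne_top Finset.univ
      (fun i _ ↦ tendsto_exponentialPDF_one_inv_mul (u i)) (fun i _ ↦ by split_ifs <;> simp)
    simpa [Fintype.prod_boole, indicator_apply] using this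

theorem bound_tendsto_classic_general
    (n : ℕ) (L : Fin n → ℝ)
    (S t : ℝ)
    (μ : Measure (Fin n → ℝ))
    (hμ : μ = Measure.pi fun _ : Fin n => expMeasure 1) :
    Tendsto
      (fun P : ℝ => ENNReal.ofReal (P ^ n) *
        μ {lam : Fin n → ℝ | ∑ i, L i * Real.logb 2 (1 + S * lam i * P) < t})
      atTop
      (nhds (volume {u : Fin n → ℝ |
        (∀ i, 0 ≤ u i) ∧ ∑ i, L i * Real.logb 2 (1 + S * u i) < t})) := by
  set C := {u : Fin n → ℝ | ∑ i, L i * Real.logb 2 (1 + S * u i) < t}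
  refine (tendsto_setLIntegral_pi_exponentialPDF_inv_smul C).congr' ?_
  filter_upwards [eventually_gt_atTop 0] with P hP
  have hA : {lam : Fin n → ℝ | ∑ i, L i * Real.logb 2 (1 + S * lam i * P) < t} =
      (P • ·) ⁻¹' C := by
    ext lam
    simp only [C, mem_ofPred_eq, mem_preimage, Pi.smul_apply, smul_eq_mul, mul_comm P, mul_assoc]
  have hscale := ofReal_pow_finrank_mul_withDensity_preimage_smul volume
    (fun x : Fin n → ℝ ↦ ∏ i, exponentialPDF 1 (x i)) hP C
  rw [Module.finrank_fin_fun] at hscale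
  rw [hμ, pi_expMeasure_one_eq_withDensity, hA, hscale]

theorem bound_tendsto_classic
    (n : ℕ) (hn : 1 ≤ n) (L : Fin n → ℝ) (hL : ∀ i, 0 < L i)
    (S t : ℝ) (hS : 0 < S) (ht : 0 < t)
    (μ : Measure (Fin n → ℝ))
    (hμ : μ = Measure.pi fun _ : Fin n => expMeasure 1) :
    Tendsto
      (fun P : ℝ => ENNReal.ofReal (P ^ n) *
        μ {lam : Fin n → ℝ | ∑ i, L i * Real.logb 2 (1 + S * lam i * P) < t})
      atTop
      (nhds (volume {u : Fin n → ℝ |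
        (∀ i, 0 ≤ u i) ∧ ∑ i, L i * Real.logb 2 (1 + S * u i) < t})) :=
  bound_tendsto_classic_general n L S t μ hμ
end

section
/- Let n ≥ 1, let L₁,…,Lₙ > 0, S > 0, t > 0, and let μ be the product on ℝⁿ of n copies of the exponential distribution with rate 1. Then for every P > 0, Pⁿ · μ{λ ∈ ℝⁿ : ∑_{i=1}^n Lᵢ·log₂(1 + S·λᵢ·P) < t} ≤ Lebesgue measure of {u ∈ ℝⁿ : uᵢ ≥ 0 for all i, and ∑_{i=1}^n Lᵢ·log₂(1 + S·uᵢ) < t}. -/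
open MeasureTheory ProbabilityTheory Real Set Pointwise

lemma my_pi_mono {ι : Type*} [Fintype ι] {α : ι → Type*} [∀ i, MeasurableSpace (α i)]
    {μ ν : ∀ i, Measure (α i)} (h : ∀ i, μ i ≤ ν i) : Measure.pi μ ≤ Measure.pi ν := by
  refine Measure.le_iff.mpr fun s hs => ?_
  rw [Measure.pi, Measure.pi, toMeasure_apply _ _ hs,
    toMeasure_apply _ _ hs]
  refine OuterMeasure.le_pi.mpr (fun u _ => ?_) s
  refine (OuterMeasure.pi_pi_le _ u).trans ?_
  exact Finset.prod_le_prod' fun i _ => (h i) (u i)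

lemma exp_le_restrict : expMeasure 1 ≤ (volume : Measure ℝ).restrict (Ici 0) := by
  refine Measure.le_iff.mpr fun s hs => ?_
  rw [expMeasure, gammaMeasure, withDensity_apply _ hs, Measure.restrict_apply hs]
  calc ∫⁻ x in s, gammaPDF 1 1 x
      ≤ ∫⁻ x in s, (Ici (0:ℝ)).indicator 1 x := by
        refine lintegral_mono fun x => ?_
        rw [gammaPDF_eq]
        by_cases hx : (0:ℝ) ≤ x
        · rw [if_pos hx, indicator_of_mem (mem_Ici.mpr hx)]
          simp only [Pi.one_apply]
          refine ENNReal.ofReal_le_one.mpr ?_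
          rw [Real.Gamma_one]
          simp only [one_pow, one_div, inv_one, one_mul, sub_self, Real.rpow_zero]
          have hx1 : rexp (-x) ≤ 1 := Real.exp_le_one_iff.mpr (by linarith)
          linarith
        · rw [if_neg hx, indicator_of_notMem (by simpa using hx)]; simp
    _ = volume (s ∩ Ici 0) := by
        rw [lintegral_indicator_one measurableSet_Ici, Measure.restrict_apply measurableSet_Ici,
          inter_comm]

lemma pi_restrict_Ici (n : ℕ) :
    Measure.pi (fun _ : Fin n => (volume : Measure ℝ).restrict (Ici 0)) =
      (volume : Measure (Fin n → ℝ)).restrict (univ.pi fun _ => Ici 0) := by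
  refine Measure.pi_eq fun s hs => ?_
  rw [Measure.restrict_apply (MeasurableSet.univ_pi hs), ← pi_inter_distrib, volume_pi_pi]
  exact Finset.prod_congr rfl fun i _ => (Measure.restrict_apply (hs i)).symm

theorem bound_le_classic
    (n : ℕ) (hn : 1 ≤ n) (L : Fin n → ℝ) (hL : ∀ i, 0 < L i)
    (S t : ℝ) (hS : 0 < S) (ht : 0 < t)
    (μ : Measure (Fin n → ℝ))
    (hμ : μ = Measure.pi fun _ : Fin n => expMeasure 1) :
    ∀ P : ℝ, 0 < P →
      ENNReal.ofReal (P ^ n) *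
          μ {lam : Fin n → ℝ | ∑ i, L i * Real.logb 2 (1 + S * lam i * P) < t}
        ≤ volume {u : Fin n → ℝ |
            (∀ i, 0 ≤ u i) ∧ ∑ i, L i * Real.logb 2 (1 + S * u i) < t} := by
  intro P hP
  set A : Set (Fin n → ℝ) :=
    {lam : Fin n → ℝ | ∑ i, L i * Real.logb 2 (1 + S * lam i * P) < t} with hA
  set A' : Set (Fin n → ℝ) :=
    {lam : Fin n → ℝ | (∀ i, 0 ≤ lam i) ∧ ∑ i, L i * Real.logb 2 (1 + S * lam i * P) < t}
  set B : Set (Fin n → ℝ) :=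
    {u : Fin n → ℝ | (∀ i, 0 ≤ u i) ∧ ∑ i, L i * Real.logb 2 (1 + S * u i) < t}
  -- step 1: μ A ≤ volume A'
  have h1 : μ A ≤ volume A' := by
    have hle : μ ≤ (volume : Measure (Fin n → ℝ)).restrict (univ.pi fun _ => Ici 0) := by
      rw [hμ, ← pi_restrict_Ici]
      exact my_pi_mono fun _ => exp_le_restrict
    refine (hle A).trans ?_
    rw [Measure.restrict_apply' (MeasurableSet.univ_pi fun _ => measurableSet_Ici)]
    refine measure_mono fun x hx => ?_
    obtain ⟨hx1, hx2⟩ := hx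
    exact ⟨fun i => hx2 i (Set.mem_univ i), hx1⟩
  -- step 2: B = P • A'
  have hB : B = P • A' := by
    ext u
    rw [Set.mem_smul_set_iff_inv_smul_mem₀ hP.ne']
    constructor
    · rintro ⟨h1, h2⟩
      refine ⟨fun i => ?_, ?_⟩
      · simp only [Pi.smul_apply, smul_eq_mul]
        exact mul_nonneg (by positivity) (h1 i)
      · convert h2 using 2 with i
        simp only [Pi.smul_apply, smul_eq_mul]
        field_simp
    · rintro ⟨h1, h2⟩
      constructor
      · intro i
        have := h1 i
        simp only [Pi.smul_apply, smul_eq_mul] at this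
        have h3 := mul_nonneg hP.le this
        rwa [← mul_assoc, mul_inv_cancel₀ hP.ne', one_mul] at h3
      · convert h2 using 2 with i
        simp only [Pi.smul_apply, smul_eq_mul]
        field_simp
  have h2 : volume B = ENNReal.ofReal (P ^ n) * volume A' := by
    rw [hB, Measure.addHaar_smul, Module.finrank_fin_fun, abs_of_pos (pow_pos hP n)]
  rw [h2]
  exact mul_le_mul_right h1 _
end

section
/- Let κ > 0 and c ≥ 0, and let 0 < p ≤ P. Then ∫_0^{c/p} τ^{κ-1}·e^{-τ} dτ ≤ (P/p)^κ · ∫_0^{c/P} τ^{κ-1}·e^{-τ} dτ. -/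
open Real

lemma incGamma_aux_integrable (κ r a : ℝ) (hκ : 0 < κ) (hr : 0 < r) (ha : 0 ≤ a) :
    IntervalIntegrable (fun s : ℝ => s ^ (κ - 1) * Real.exp (-(r * s))) MeasureTheory.volume 0 a := by
  have h1 : IntervalIntegrable (fun s : ℝ => s ^ (κ - 1)) MeasureTheory.volume 0 a :=
    intervalIntegral.intervalIntegrable_rpow' (by linarith)
  apply h1.mono_fun
  · exact Measurable.aestronglyMeasurable (by fun_prop)
  · filter_upwards [MeasureTheory.ae_restrict_mem measurableSet_uIoc] with s hs
    rw [Set.uIoc_of_le ha] at hs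
    have hs0 : 0 < s := hs.1
    simp only [Real.norm_eq_abs, abs_mul, abs_of_nonneg (Real.rpow_nonneg hs0.le _),
      abs_of_nonneg (Real.exp_pos _).le]
    have h2 : Real.exp (-(r * s)) ≤ 1 := by
      rw [Real.exp_le_one_iff]
      nlinarith
    nlinarith [Real.rpow_nonneg hs0.le (κ - 1)]

theorem incGamma_scaling_bound
    (κ c p P : ℝ) (hκ : 0 < κ) (hc : 0 ≤ c) (hp : 0 < p) (hpP : p ≤ P) :
    ∫ τ in (0:ℝ)..(c / p), τ ^ (κ - 1) * Real.exp (-τ)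
      ≤ (P / p) ^ κ * ∫ τ in (0:ℝ)..(c / P), τ ^ (κ - 1) * Real.exp (-τ) := by
  have hP : 0 < P := lt_of_lt_of_le hp hpP
  set r := P / p with hrdef
  have hr1 : 1 ≤ r := (one_le_div hp).mpr hpP
  have hr0 : 0 < r := lt_of_lt_of_le one_pos hr1
  have ha : 0 ≤ c / P := div_nonneg hc hP.le
  -- substitution
  have hsub : ∫ s in (0:ℝ)..(c / P), ((r * s) ^ (κ - 1) * Real.exp (-(r * s)))
      = r⁻¹ • ∫ τ in (0:ℝ)..(c / p), τ ^ (κ - 1) * Real.exp (-τ) := by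
    rw [intervalIntegral.integral_comp_mul_left (fun τ => τ ^ (κ - 1) * Real.exp (-τ)) hr0.ne']
    have h1 : r * (c / P) = c / p := by
      rw [hrdef, div_mul_div_comm, mul_comm P c, mul_comm p P, mul_comm P p,
        mul_div_mul_right _ _ hP.ne']
    rw [mul_zero, h1]
  have hpt : ∀ s ∈ Set.uIcc (0:ℝ) (c / P),
      (r * s) ^ (κ - 1) * Real.exp (-(r * s))
        = r ^ (κ - 1) * (s ^ (κ - 1) * Real.exp (-(r * s))) := by
    intro s hs
    rw [Set.uIcc_of_le ha] at hs
    rw [Real.mul_rpow hr0.le hs.1]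
    ring
  have heq : ∫ τ in (0:ℝ)..(c / p), τ ^ (κ - 1) * Real.exp (-τ)
      = r ^ κ * ∫ s in (0:ℝ)..(c / P), s ^ (κ - 1) * Real.exp (-(r * s)) := by
    have := hsub
    rw [intervalIntegral.integral_congr hpt, intervalIntegral.integral_const_mul] at this
    rw [smul_eq_mul] at this
    have h2 : ∫ τ in (0:ℝ)..(c / p), τ ^ (κ - 1) * Real.exp (-τ)
        = r * (r ^ (κ - 1) * ∫ s in (0:ℝ)..(c / P), s ^ (κ - 1) * Real.exp (-(r * s))) := by
      rw [this]; field_simp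
    rw [h2, ← mul_assoc]
    congr 1
    have h3 : κ = 1 + (κ - 1) := by ring
    rw [h3, Real.rpow_add hr0, Real.rpow_one]
    ring_nf
  rw [heq]
  apply mul_le_mul_of_nonneg_left _ (Real.rpow_nonneg hr0.le κ)
  apply intervalIntegral.integral_mono_on ha
    (incGamma_aux_integrable κ r (c / P) hκ hr0 ha)
  · have := incGamma_aux_integrable κ 1 (c / P) hκ one_pos ha
    simpa using this
  · intro s hs
    apply mul_le_mul_of_nonneg_left _ (Real.rpow_nonneg hs.1 _)
    apply Real.exp_le_exp.mpr
    nlinarith [hs.1]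
end

section
/- Let n ≥ 1 be a natural number, L > 0, S > 0, t > 0, P > 0, and 0 < p ≤ P. Let μ be the Gamma distribution with shape n and rate 1 on ℝ. Then μ{λ ∈ ℝ : L·log₂(1 + S·p·λ) < t} ≤ (1/(n−1)!)·(P/p)^n · ∫_0^{(2^{t/L} − 1)/(S·P)} τ^{n-1}·e^{-τ} dτ. -/
/-!
The outage event is contained in `{λ ≤ c}` with `c = (2^{t/L} - 1)/(S p)`, whose `Gamma(n, 1)`
probability is `γ(n, c)/Γ(n)`. The substitution `τ = (p/P) x` gives
`γ(n, (p/P) c) = (p/P)^n ∫₀ᶜ x^{n-1} e^{-(p/P) x} dx ≥ (p/P)^n γ(n, c)`, because `p/P ≤ 1`.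
-/

open MeasureTheory ProbabilityTheory Real Set

noncomputable def lowerIncompleteGamma (s x : ℝ) : ℝ :=
  ∫ τ in (0 : ℝ)..x, τ ^ (s - 1) * exp (-τ)

lemma intervalIntegrable_rpow_mul_exp_neg_mul {s : ℝ} (hs : 0 < s) (b c d : ℝ) :
    IntervalIntegrable (fun x : ℝ ↦ x ^ (s - 1) * exp (-(b * x))) volume c d :=
  (intervalIntegral.intervalIntegrable_rpow' (by linarith)).mul_continuousOn (by fun_prop)

lemma lowerIncompleteGamma_mul {b c : ℝ} (s : ℝ) (hb : 0 < b) (hc : 0 ≤ c) :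
    lowerIncompleteGamma s (b * c) = b ^ s * ∫ x in (0 : ℝ)..c, x ^ (s - 1) * exp (-(b * x)) := by
  have hsubst := intervalIntegral.smul_integral_comp_mul_left (a := 0) (b := c)
    (fun τ : ℝ ↦ τ ^ (s - 1) * exp (-τ)) b
  rw [mul_zero] at hsubst
  rw [lowerIncompleteGamma, ← hsubst, smul_eq_mul,
    ← intervalIntegral.integral_const_mul, ← intervalIntegral.integral_const_mul]
  refine intervalIntegral.integral_congr fun x hx ↦ ?_
  rw [uIcc_of_le hc] at hx
  rw [mul_rpow hb.le hx.1, rpow_sub_one hb.ne']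
  field_simp

lemma lowerIncompleteGamma_le_integral_rpow_mul_exp_neg_mul {s b c : ℝ} (hs : 0 < s) (hb : b ≤ 1)
    (hc : 0 ≤ c) :
    lowerIncompleteGamma s c ≤ ∫ x in (0 : ℝ)..c, x ^ (s - 1) * exp (-(b * x)) := by
  refine intervalIntegral.integral_mono_on hc
    (by simpa using intervalIntegrable_rpow_mul_exp_neg_mul hs 1 0 c)
    (intervalIntegrable_rpow_mul_exp_neg_mul hs b 0 c) fun x hx ↦ ?_
  gcongr
  · exact rpow_nonneg hx.1 _
  · nlinarith [hx.1]

lemma lowerIncompleteGamma_le_inv_rpow_mul {s b c : ℝ} (hs : 0 < s) (hb : 0 < b) (hb1 : b ≤ 1)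
    (hc : 0 ≤ c) :
    lowerIncompleteGamma s c ≤ (b ^ s)⁻¹ * lowerIncompleteGamma s (b * c) := by
  rw [lowerIncompleteGamma_mul s hb hc, inv_mul_cancel_left₀ (rpow_pos_of_pos hb s).ne']
  exact lowerIncompleteGamma_le_integral_rpow_mul_exp_neg_mul hs hb1 hc

lemma gammaMeasure_Iic {a r c : ℝ} (ha : 0 < a) (hr : 0 < r) (hc : 0 ≤ c) :
    gammaMeasure a r (Iic c) = ENNReal.ofReal (lowerIncompleteGamma a (r * c) / Gamma a) := by
  have := isProbabilityMeasure_gammaMeasure ha hr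
  rw [← ofReal_cdf, cdf_gammaMeasure_eq_integral ha hr, lowerIncompleteGamma_mul a hr hc]
  congr 1
  have hvanish : ∀ᵐ x ∂volume, x ∈ Iic c \ Ioc 0 c → gammaPDFReal a r x = 0 := by
    filter_upwards [Measure.ae_ne volume 0] with x hx0 hx
    have : x < 0 := lt_of_le_of_ne (not_lt.mp fun h ↦ hx.2 ⟨h, hx.1⟩) hx0
    simp [gammaPDFReal, not_le.mpr this]
  rw [setIntegral_eq_of_subset_of_ae_sdiff_eq_zero measurableSet_Iic.nullMeasurableSet
    Ioc_subset_Iic_self hvanish, ← intervalIntegral.integral_of_le hc, mul_div_right_comm,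
    ← intervalIntegral.integral_const_mul]
  refine intervalIntegral.integral_congr fun x hx ↦ ?_
  rw [uIcc_of_le hc] at hx
  simp only [gammaPDFReal, if_pos hx.1]
  ring

lemma setOf_mul_logb_lt_subset_Iic {b L K t : ℝ} (hb : 1 < b) (hL : 0 < L) (hK : 0 < K)
    (ht : 0 ≤ t) :
    {x : ℝ | L * logb b (1 + K * x) < t} ⊆ Iic ((b ^ (t / L) - 1) / K) := by
  intro x hx
  rw [mem_Iic, le_div_iff₀ hK]
  by_contra! hlt
  have hpos : 0 < 1 + K * x := by linarith [one_le_rpow hb.le (div_nonneg ht hL.le)]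
  have : t / L < logb b (1 + K * x) := (lt_logb_iff_rpow_lt hb hpos).mpr (by linarith)
  rw [div_lt_iff₀ hL] at this
  exact (show L * logb b (1 + K * x) < t from hx).not_ge (by linarith)

theorem outage_bound_chase_combining
    (n : ℕ) (hn : 1 ≤ n) (L S t P p : ℝ)
    (hL : 0 < L) (hS : 0 < S) (ht : 0 < t) (hP : 0 < P)
    (hp : 0 < p) (hpP : p ≤ P)
    (μ : Measure ℝ) (hμ : μ = gammaMeasure (n : ℝ) 1) :
    μ {lam : ℝ | L * Real.logb 2 (1 + S * p * lam) < t}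
      ≤ ENNReal.ofReal ((1 / (Nat.factorial (n - 1) : ℝ)) * (P / p) ^ n *
          ∫ τ in (0:ℝ)..(((2:ℝ) ^ (t / L) - 1) / (S * P)),
            τ ^ (n - 1 : ℝ) * Real.exp (-τ)) := by
  subst hμ
  set c := ((2 : ℝ) ^ (t / L) - 1) / (S * p) with hc_def
  have hc : 0 ≤ c :=
    div_nonneg (sub_nonneg.mpr (one_le_rpow one_le_two (div_nonneg ht.le hL.le))) (by positivity)
  have hn₀ : (0 : ℝ) < n := by exact_mod_cast hn
  have hGamma : Gamma n = (n - 1).factorial := by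
    obtain ⟨m, rfl⟩ := Nat.exists_eq_add_of_le' hn
    simpa using Gamma_nat_eq_factorial m
  have hd : ((2 : ℝ) ^ (t / L) - 1) / (S * P) = p / P * c := by
    rw [hc_def]; field_simp
  have hpow : (P / p) ^ n = ((p / P) ^ (n : ℝ))⁻¹ := by rw [rpow_natCast, ← inv_pow, inv_div]
  calc _ ≤ gammaMeasure n 1 (Iic c) :=
        measure_mono (setOf_mul_logb_lt_subset_Iic one_lt_two hL (mul_pos hS hp) ht.le)
    _ = ENNReal.ofReal (lowerIncompleteGamma n c / Gamma n) := by
        rw [gammaMeasure_Iic hn₀ one_pos hc, one_mul]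
    _ ≤ _ := by
        refine ENNReal.ofReal_le_ofReal ?_
        rw [hd, hpow, hGamma, one_div, div_eq_inv_mul, mul_assoc]
        exact mul_le_mul_of_nonneg_left (lowerIncompleteGamma_le_inv_rpow_mul hn₀
          (div_pos hp hP) (div_le_one_of_le₀ hpP hP.le) hc) (by positivity)
end
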